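/- Let 1 ≤ p₁ ≤ p₂ < ∞ and let φ₁, φ₂ be positive functions on the odd naturals. Suppose there exists C > 0 such that φ₂(2N+1) ≤ C φ₁(2N+1) for every N ∈ ℕ. Then for every sequence x, ‖x‖_{wℓ^{p₁}_{φ₁}} ≤ C ‖x‖_{wℓ^{p₂}_{φ₂}}; in particular wℓ^{p₂}_{φ₂} ⊆ wℓ^{p₁}_{φ₁}. -/

import Mathlib

open scoped ENNReal NNReal BigOperators

/-- The discrete "ball" `S_{m,N} = {m-N, …, m+N}` as a finite set of integers. -/
noncomputable def S (m : ℤ) (N : ℕ) : Finset ℤ := Finset.Icc (m - N) (m + N)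

open Classical in
/-- The cardinality of `{k ∈ S_{m,N} : |x_k| > γ}`. -/
noncomputable def weakCard (x : ℤ → ℂ) (m : ℤ) (N : ℕ) (γ : ℝ≥0) : ℕ :=
  ((S m N).filter (fun k => γ < ‖x k‖₊)).card

/-- The generalized weak type discrete Morrey norm `‖x‖_{wℓ^p_φ}`. -/
noncomputable def wgMorreyNorm (p : ℝ) (φ : ℕ → ℝ) (x : ℤ → ℂ) : ℝ≥0∞ :=
  ⨆ (m : ℤ) (N : ℕ) (γ : ℝ≥0) (_ : 0 < γ),
    (ENNReal.ofReal (φ (2 * N + 1)))⁻¹ * (γ : ℝ≥0∞) *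
      ((weakCard x m N γ : ℝ≥0∞) / (2 * (N : ℝ≥0∞) + 1)) ^ (1 / p)

/-! Since the proportion `|{k ∈ S_{m,N} : |x_k| > γ}| / (2N+1)` lies in `[0, 1]`, its `1/p`-th
power decreases as `1/p` grows, i.e. increases with `p`; together with `1/φ₁ ≤ C/φ₂` this bounds
each term of the supremum defining `‖x‖_{wℓ^{p₁}_{φ₁}}` by `C` times the corresponding term for
`‖x‖_{wℓ^{p₂}_{φ₂}}`. -/

theorem ENNReal.inv_le_mul_inv_of_le_mul {a b c : ℝ≥0∞} (hc₀ : c ≠ 0) (hc : c ≠ ∞)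
    (h : b ≤ c * a) : a⁻¹ ≤ c * b⁻¹ :=
  calc a⁻¹ = c * (c * a)⁻¹ := by
        rw [ENNReal.mul_inv (.inl hc₀) (.inl hc), ← mul_assoc, ENNReal.mul_inv_cancel hc₀ hc,
          one_mul]
    _ ≤ c * b⁻¹ := by gcongr

theorem card_S (m : ℤ) (N : ℕ) : (S m N).card = 2 * N + 1 := by
  simp only [S, Int.card_Icc]
  omega

theorem weakCard_le (x : ℤ → ℂ) (m : ℤ) (N : ℕ) (γ : ℝ≥0) : weakCard x m N γ ≤ 2 * N + 1 :=
  card_S m N ▸ Finset.card_filter_le _ _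

theorem weakCard_div_le_one (x : ℤ → ℂ) (m : ℤ) (N : ℕ) (γ : ℝ≥0) :
    (weakCard x m N γ : ℝ≥0∞) / (2 * (N : ℝ≥0∞) + 1) ≤ 1 := by
  refine ENNReal.div_le_of_le_mul ?_
  rw [one_mul]
  exact_mod_cast weakCard_le x m N γ

theorem le_wgMorreyNorm (p : ℝ) (φ : ℕ → ℝ) (x : ℤ → ℂ) (m : ℤ) (N : ℕ) {γ : ℝ≥0}
    (hγ : 0 < γ) :
    (ENNReal.ofReal (φ (2 * N + 1)))⁻¹ * (γ : ℝ≥0∞) *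
      ((weakCard x m N γ : ℝ≥0∞) / (2 * (N : ℝ≥0∞) + 1)) ^ (1 / p) ≤ wgMorreyNorm p φ x :=
  le_iSup₂_of_le m N (le_iSup₂_of_le γ hγ le_rfl)

theorem stmt17_general (p₁ p₂ : ℝ) (hp₁ : 1 ≤ p₁) (hp : p₁ ≤ p₂)
    (φ₁ φ₂ : ℕ → ℝ)
    (C : ℝ) (hC : 0 < C) (h : ∀ N : ℕ, φ₂ (2 * N + 1) ≤ C * φ₁ (2 * N + 1)) :
    ∀ x : ℤ → ℂ, wgMorreyNorm p₁ φ₁ x ≤ ENNReal.ofReal C * wgMorreyNorm p₂ φ₂ x := by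
  intro x
  refine iSup_le fun m => iSup_le fun N => iSup_le fun γ => iSup_le fun hγ => ?_
  set r := (weakCard x m N γ : ℝ≥0∞) / (2 * (N : ℝ≥0∞) + 1)
  have hr : r ^ (1 / p₁) ≤ r ^ (1 / p₂) :=
    ENNReal.rpow_le_rpow_of_exponent_ge (weakCard_div_le_one x m N γ)
      (one_div_le_one_div_of_le (by linarith) hp)
  have hφ : (ENNReal.ofReal (φ₁ (2 * N + 1)))⁻¹
      ≤ ENNReal.ofReal C * (ENNReal.ofReal (φ₂ (2 * N + 1)))⁻¹ := by
    refine ENNReal.inv_le_mul_inv_of_le_mul (by simpa using hC) ENNReal.ofReal_ne_top ?_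
    rw [← ENNReal.ofReal_mul hC.le]
    exact ENNReal.ofReal_le_ofReal (h N)
  calc (ENNReal.ofReal (φ₁ (2 * N + 1)))⁻¹ * (γ : ℝ≥0∞) * r ^ (1 / p₁)
      ≤ ENNReal.ofReal C * (ENNReal.ofReal (φ₂ (2 * N + 1)))⁻¹ * γ * r ^ (1 / p₂) := by
        gcongr
    _ = ENNReal.ofReal C * ((ENNReal.ofReal (φ₂ (2 * N + 1)))⁻¹ * γ * r ^ (1 / p₂)) := by ring
    _ ≤ ENNReal.ofReal C * wgMorreyNorm p₂ φ₂ x := by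
        gcongr
        exact le_wgMorreyNorm p₂ φ₂ x m N hγ

theorem stmt17 (p₁ p₂ : ℝ) (hp₁ : 1 ≤ p₁) (hp : p₁ ≤ p₂)
    (φ₁ φ₂ : ℕ → ℝ)
    (hφ₁ : ∀ N : ℕ, 0 < φ₁ (2 * N + 1)) (hφ₂ : ∀ N : ℕ, 0 < φ₂ (2 * N + 1))
    (C : ℝ) (hC : 0 < C) (h : ∀ N : ℕ, φ₂ (2 * N + 1) ≤ C * φ₁ (2 * N + 1)) :
    ∀ x : ℤ → ℂ, wgMorreyNorm p₁ φ₁ x ≤ ENNReal.ofReal C * wgMorreyNorm p₂ φ₂ x :=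
  stmt17_general p₁ p₂ hp₁ hp φ₁ φ₂ C hC h
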